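/- Let H, σ : ℝ³ → M₃(ℝ) be smooth symmetric trace-free matrix fields and ω, a : ℝ³ → ℝ³ smooth vector fields satisfying pointwise the purely magnetic equations [σ,H] = 3Hω, div H = 0, curl H = −2 a∧H, and H = curl σ + (Dω)^ + 2 a⊗̂ω. Then pointwise Tr H² = 4⟨H, Dω + 2 a⊗ω⟩. -/

import Mathlib

open Matrix BigOperators
open scoped RealInnerProductSpace

set_option maxHeartbeats 4000000

noncomputable section

/-- Vectors in ℝ³. -/
abbrev V3 := Fin 3 → ℝ

/-- 3×3 real matrices. -/
abbrev M3 := Matrix (Fin 3) (Fin 3) ℝ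

/-- The Levi-Civita symbol on three indices. -/
def eps (a b c : Fin 3) : ℝ :=
  if (a, b, c) = (0, 1, 2) ∨ (a, b, c) = (1, 2, 0) ∨ (a, b, c) = (2, 0, 1) then 1
  else if (a, b, c) = (0, 2, 1) ∨ (a, b, c) = (2, 1, 0) ∨ (a, b, c) = (1, 0, 2) then -1
  else 0

/-- The Frobenius inner product ⟨A,B⟩ = Σ_{i,j} A_{ij} B_{ij}. -/
def frob (A B : M3) : ℝ := ∑ i, ∑ j, A i j * B i j

/-- The Euclidean inner product on ℝ³. -/
def dot3 (v w : V3) : ℝ := ∑ a, v a * w a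

/-- The generalized vector product of two 3×3 matrices:
    [A,B]_a = Σ_{b,c} ε_{abc} (AB)_{bc}. -/
def mcross (A B : M3) : V3 := fun a => ∑ b, ∑ c, eps a b c * (A * B) b c

/-- v ∧ B : (v∧B)_{ab} = ½ Σ_{c,d} (ε_{acd} v_c B_{db} + ε_{bcd} v_c B_{da}). -/
def vwedge (v : V3) (B : M3) : M3 := fun a b =>
  (1 / 2 : ℝ) * ∑ c, ∑ d, (eps a c d * v c * B d b + eps b c d * v c * B d a)

/-- The tensor product (a⊗ω)_{ij} = a_i ω_j. -/
def tens (a ω : V3) : M3 := fun i j => a i * ω j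

/-- The trace-free symmetric part X^ = ½(X+Xᵀ) − (1/3)(Tr X)·I. -/
def hat (X : M3) : M3 := (1 / 2 : ℝ) • (X + Xᵀ) - ((1 / 3 : ℝ) * X.trace) • (1 : M3)

/-- The partial derivative ∂_c f at x of a scalar field f : ℝ³ → ℝ. -/
def pd (c : Fin 3) (f : V3 → ℝ) (x : V3) : ℝ := fderiv ℝ f x (Pi.single c 1)

/-- The curl of a matrix field:
    (curl A)_{ab} = ½ Σ_{c,d} (ε_{acd} ∂_c A_{db} + ε_{bcd} ∂_c A_{da}). -/
def curlM (A : V3 → M3) (x : V3) : M3 := fun a b =>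
  (1 / 2 : ℝ) * ∑ c, ∑ d,
    (eps a c d * pd c (fun y => A y d b) x + eps b c d * pd c (fun y => A y d a) x)

/-- The divergence of a vector field: div w = Σ_a ∂_a w_a. -/
def divV (w : V3 → V3) (x : V3) : ℝ := ∑ a, pd a (fun y => w y a) x

/-- The divergence of a matrix field: (div A)_b = Σ_a ∂_a A_{ab}. -/
def divM (A : V3 → M3) (x : V3) : V3 := fun b => ∑ a, pd a (fun y => A y a b) x

/-- The Jacobian matrix field (Dw)_{ab} = ∂_a w_b. -/
def jac (w : V3 → V3) (x : V3) : M3 := fun a b => pd a (fun y => w y b) x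

lemma pd_sum' {ι : Type*} (t : Finset ι) (f : ι → V3 → ℝ) (c : Fin 3) (x : V3)
    (hf : ∀ i ∈ t, DifferentiableAt ℝ (f i) x) :
    pd c (fun y => ∑ i ∈ t, f i y) x = ∑ i ∈ t, pd c (f i) x := by
  unfold pd
  rw [fderiv_fun_sum hf]
  simp

lemma pd_mul' (f g : V3 → ℝ) (c : Fin 3) (x : V3) (hf : DifferentiableAt ℝ f x)
    (hg : DifferentiableAt ℝ g x) :
    pd c (fun y => f y * g y) x = pd c f x * g x + f x * pd c g x := by
  unfold pd
  rw [fderiv_fun_mul hf hg]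
  simp
  ring

lemma pd_const_mul' (r : ℝ) (f : V3 → ℝ) (c : Fin 3) (x : V3) (hf : DifferentiableAt ℝ f x) :
    pd c (fun y => r * f y) x = r * pd c f x := by
  unfold pd
  rw [fderiv_const_mul hf]
  simp

/-- under the purely magnetic equations,
    Tr H² = 4⟨H, Dω + 2 a⊗ω⟩. -/
theorem stmt_5 (H σ : V3 → M3) (ω a : V3 → V3)
    (hH : ∀ i j, ContDiff ℝ (⊤ : ℕ∞) fun x => H x i j)
    (hσ : ∀ i j, ContDiff ℝ (⊤ : ℕ∞) fun x => σ x i j)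
    (hω : ∀ i, ContDiff ℝ (⊤ : ℕ∞) fun x => ω x i)
    (ha : ∀ i, ContDiff ℝ (⊤ : ℕ∞) fun x => a x i)
    (hHsym : ∀ x, (H x)ᵀ = H x) (hHtf : ∀ x, (H x).trace = 0)
    (hσsym : ∀ x, (σ x)ᵀ = σ x) (hσtf : ∀ x, (σ x).trace = 0)
    (hbi1 : ∀ x, mcross (σ x) (H x) = (3 : ℝ) • (H x).mulVec (ω x))
    (hbi2 : ∀ x, divM H x = 0)
    (hbi3 : ∀ x, curlM H x = -(2 : ℝ) • vwedge (a x) (H x))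
    (hRicci : ∀ x, H x = curlM σ x + hat (jac ω x) + (2 : ℝ) • hat (tens (a x) (ω x))) :
    ∀ x, (H x * H x).trace
      = 4 * frob (H x) (jac ω x + (2 : ℝ) • tens (a x) (ω x)) := by
  intro x
  have hHd : ∀ i j : Fin 3, Differentiable ℝ fun y => H y i j := fun i j => (hH i j).differentiable (by simp)
  have hsd : ∀ i j : Fin 3, Differentiable ℝ fun y => σ y i j := fun i j => (hσ i j).differentiable (by simp)
  have hwd : ∀ i : Fin 3, Differentiable ℝ fun y => ω y i := fun i => (hω i).differentiable (by simp)
  have dbase : ∀ b c : Fin 3, DifferentiableAt ℝ (fun y => ∑ k, σ y b k * H y k c) x :=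
    fun b c => DifferentiableAt.fun_sum fun k _ => ((hsd b k) x).mul ((hHd k c) x)
  have dbase2 : ∀ a' : Fin 3, DifferentiableAt ℝ (fun y => ∑ k, H y a' k * ω y k) x :=
    fun a' => DifferentiableAt.fun_sum fun k _ => ((hHd a' k) x).mul ((hwd k) x)
  have L : ∀ e a' : Fin 3, pd e (fun y => mcross (σ y) (H y) a') x
      = ∑ b, ∑ c, eps a' b c * ∑ k, (pd e (fun y => σ y b k) x * H x k c + σ x b k * pd e (fun y => H y k c) x) := by
    intro e a'
    have h0 : (fun y => mcross (σ y) (H y) a') = fun y => ∑ b, ∑ c, eps a' b c * ∑ k, σ y b k * H y k c := by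
      funext y; simp [mcross, Matrix.mul_apply]
    rw [h0, pd_sum' _ _ _ _ (fun b _ => DifferentiableAt.fun_sum fun c _ => ((dbase b c).const_mul _))]
    refine Finset.sum_congr rfl fun b _ => ?_
    rw [pd_sum' _ _ _ _ (fun c _ => ((dbase b c).const_mul _))]
    refine Finset.sum_congr rfl fun c _ => ?_
    rw [pd_const_mul' _ _ _ _ (dbase b c), pd_sum' _ _ _ _ (fun k _ => ((hsd b k) x).fun_mul ((hHd k c) x))]
    congr 1
    refine Finset.sum_congr rfl fun k _ => ?_
    exact pd_mul' _ _ _ _ ((hsd b k) x) ((hHd k c) x)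
  have Deq : ∀ e : Fin 3,
      (∑ b, ∑ c, eps e b c * ∑ k, (pd e (fun y => σ y b k) x * H x k c + σ x b k * pd e (fun y => H y k c) x))
      = 3 * ∑ k, (pd e (fun y => H y e k) x * ω x k + H x e k * pd e (fun y => ω y k) x) := by
    intro e
    have hfun : (fun y => mcross (σ y) (H y) e) = fun y => 3 * ∑ k, H y e k * ω y k := by
      funext y
      have h1 := congrFun (hbi1 y) e
      simpa [Matrix.mulVec, dotProduct] using h1
    rw [← L e e, hfun, pd_const_mul' _ _ _ _ (dbase2 e),
      pd_sum' _ _ _ _ (fun k _ => ((hHd e k) x).fun_mul ((hwd k) x))]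
    congr 1
    refine Finset.sum_congr rfl fun k _ => ?_
    exact pd_mul' _ _ _ _ ((hHd e k) x) ((hwd k) x)
  have D0 := Deq 0
  have D1 := Deq 1
  have D2 := Deq 2
  have Ric00 := congrFun (congrFun (hRicci x) 0) 0
  have Ric01 := congrFun (congrFun (hRicci x) 0) 1
  have Ric02 := congrFun (congrFun (hRicci x) 0) 2
  have Ric10 := congrFun (congrFun (hRicci x) 1) 0
  have Ric11 := congrFun (congrFun (hRicci x) 1) 1
  have Ric12 := congrFun (congrFun (hRicci x) 1) 2
  have Ric20 := congrFun (congrFun (hRicci x) 2) 0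
  have Ric21 := congrFun (congrFun (hRicci x) 2) 1
  have Ric22 := congrFun (congrFun (hRicci x) 2) 2
  have B1_0 := congrFun (hbi1 x) 0
  have B2_0 := congrFun (hbi2 x) 0
  have B1_1 := congrFun (hbi1 x) 1
  have B2_1 := congrFun (hbi2 x) 1
  have B1_2 := congrFun (hbi1 x) 2
  have B2_2 := congrFun (hbi2 x) 2
  have B3_00 := congrFun (congrFun (hbi3 x) 0) 0
  have B3_01 := congrFun (congrFun (hbi3 x) 0) 1
  have B3_02 := congrFun (congrFun (hbi3 x) 0) 2
  have B3_10 := congrFun (congrFun (hbi3 x) 1) 0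
  have B3_11 := congrFun (congrFun (hbi3 x) 1) 1
  have B3_12 := congrFun (congrFun (hbi3 x) 1) 2
  have B3_20 := congrFun (congrFun (hbi3 x) 2) 0
  have B3_21 := congrFun (congrFun (hbi3 x) 2) 1
  have B3_22 := congrFun (congrFun (hbi3 x) 2) 2
  have HsymE : ∀ z : V3, ∀ i j : Fin 3, H z i j = H z j i := by
    intro z i j; conv_lhs => rw [← hHsym z]
    rfl
  have SsymE : ∀ z : V3, ∀ i j : Fin 3, σ z i j = σ z j i := by
    intro z i j; conv_lhs => rw [← hσsym z]
    rfl
  have hs10 : H x 1 0 = H x 0 1 := HsymE x 1 0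
  have ss10 : σ x 1 0 = σ x 0 1 := SsymE x 1 0
  have pdh10 : ∀ e : Fin 3, pd e (fun y => H y 1 0) x = pd e (fun y => H y 0 1) x := by
    intro e; congr 1; funext y; exact HsymE y 1 0
  have pds10 : ∀ e : Fin 3, pd e (fun y => σ y 1 0) x = pd e (fun y => σ y 0 1) x := by
    intro e; congr 1; funext y; exact SsymE y 1 0
  have hs20 : H x 2 0 = H x 0 2 := HsymE x 2 0
  have ss20 : σ x 2 0 = σ x 0 2 := SsymE x 2 0
  have pdh20 : ∀ e : Fin 3, pd e (fun y => H y 2 0) x = pd e (fun y => H y 0 2) x := by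
    intro e; congr 1; funext y; exact HsymE y 2 0
  have pds20 : ∀ e : Fin 3, pd e (fun y => σ y 2 0) x = pd e (fun y => σ y 0 2) x := by
    intro e; congr 1; funext y; exact SsymE y 2 0
  have hs21 : H x 2 1 = H x 1 2 := HsymE x 2 1
  have ss21 : σ x 2 1 = σ x 1 2 := SsymE x 2 1
  have pdh21 : ∀ e : Fin 3, pd e (fun y => H y 2 1) x = pd e (fun y => H y 1 2) x := by
    intro e; congr 1; funext y; exact HsymE y 2 1
  have pds21 : ∀ e : Fin 3, pd e (fun y => σ y 2 1) x = pd e (fun y => σ y 1 2) x := by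
    intro e; congr 1; funext y; exact SsymE y 2 1
  have htr : H x 2 2 = -(H x 0 0) - H x 1 1 := by
    have := hHtf x; simp [Matrix.trace, Matrix.diag, Fin.sum_univ_three] at this; linarith
  have str : σ x 2 2 = -(σ x 0 0) - σ x 1 1 := by
    have := hσtf x; simp [Matrix.trace, Matrix.diag, Fin.sum_univ_three] at this; linarith
  set_option maxHeartbeats 2000000 in
  simp [Matrix.trace, Matrix.diag, Matrix.mul_apply, Matrix.add_apply, Matrix.smul_apply, Matrix.one_apply, Matrix.mulVec, dotProduct, Pi.smul_apply, smul_eq_mul, frob, jac, tens, curlM, hat, vwedge, divM, mcross, eps, Prod.mk.injEq, Pi.zero_apply, Fin.sum_univ_three] at Ric00 Ric01 Ric02 Ric10 Ric11 Ric12 Ric20 Ric21 Ric22 B1_0 B1_1 B1_2 B2_0 B2_1 B2_2 B3_00 B3_01 B3_02 B3_10 B3_11 B3_12 B3_20 B3_21 B3_22 D0 D1 D2 ⊢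
  set_option maxHeartbeats 2000000 in
  simp only [hs10, hs20, hs21, ss10, ss20, ss21, pdh10, pdh20, pdh21, pds10, pds20, pds21, htr, str] at Ric00 Ric01 Ric02 Ric10 Ric11 Ric12 Ric20 Ric21 Ric22 B1_0 B1_1 B1_2 B2_0 B2_1 B2_2 B3_00 B3_01 B3_02 B3_10 B3_11 B3_12 B3_20 B3_21 B3_22 D0 D1 D2 ⊢
  set_option maxHeartbeats 4000000 in
  linear_combination
    H x 0 0 * Ric00 +
    H x 0 1 * Ric01 +
    H x 0 2 * Ric02 +
    H x 0 1 * Ric10 +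
    H x 1 1 * Ric11 +
    H x 1 2 * Ric12 +
    H x 0 2 * Ric20 +
    H x 1 2 * Ric21 +
    (-(H x 0 0) - H x 1 1) * Ric22 +
    D0 +
    D1 +
    D2 +
    3 * ω x 0 * B2_0 +
    3 * ω x 1 * B2_1 +
    3 * ω x 2 * B2_2 +
    σ x 0 0 * B3_00 +
    σ x 0 1 * B3_01 +
    σ x 0 2 * B3_02 +
    σ x 0 1 * B3_10 +
    σ x 1 1 * B3_11 +
    σ x 1 2 * B3_12 +
    σ x 0 2 * B3_20 +
    σ x 1 2 * B3_21 +
    (-(σ x 0 0) - σ x 1 1) * B3_22 +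
    2 * a x 0 * B1_0 +
    2 * a x 1 * B1_1 +
    2 * a x 2 * B1_2
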